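/- Let Φ : M_d → M_d be a unital quantum channel and ρ a positive definite density matrix. Then H(ρ) − H(Φ(ρ)) ≤ tr((ρ − Φ*Φ(ρ)) log ρ), where H(ρ) = tr(ρ log ρ) and Φ* is the trace adjoint of Φ. -/

import Mathlib

/-
Because `Φ*` is the trace adjoint of `Φ`, `tr(Φ*Φ(ρ) log ρ) = tr(Φ(ρ) Φ(log ρ))`, so the claim is
`tr(Φ(ρ) Φ(log ρ)) ≤ tr(Φ(ρ) log Φ(ρ))`, the trace form of `Φ(log ρ) ≤ log Φ(ρ)`.
Let `ρ = ∑ λᵢ Pᵢ` and `Φ(ρ) = ∑ μⱼ Qⱼ` be spectral decompositions. The numbers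
`cⱼᵢ = tr(Qⱼ Φ(Pᵢ))` are nonnegative since `Φ` is positive, each row sums to `1` since `Φ` is
unital, and `∑ᵢ cⱼᵢ λᵢ = μⱼ`. Jensen's inequality for the concave `log` therefore gives
`tr(Qⱼ Φ(log ρ)) = ∑ᵢ cⱼᵢ log λᵢ ≤ log μⱼ`; multiply by `μⱼ ≥ 0` and sum over `j`.
-/

open Matrix
open scoped ComplexOrder

noncomputable section

variable {d : ℕ}

/-- Matrix logarithm of a Hermitian matrix via spectral decomposition (junk value `0`
otherwise). -/
def mlog (A : Matrix (Fin d) (Fin d) ℂ) : Matrix (Fin d) (Fin d) ℂ :=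
  if hA : A.IsHermitian then
    (hA.eigenvectorUnitary : Matrix (Fin d) (Fin d) ℂ) *
      Matrix.diagonal (fun i => (Real.log (hA.eigenvalues i) : ℂ)) *
      star (hA.eigenvectorUnitary : Matrix (Fin d) (Fin d) ℂ)
  else 0

/-- The ampliation `id_n ⊗ Φ` acting on block matrices. -/
def ampliation (Φ : Matrix (Fin d) (Fin d) ℂ →ₗ[ℂ] Matrix (Fin d) (Fin d) ℂ) (n : ℕ)
    (M : Matrix (Fin n × Fin d) (Fin n × Fin d) ℂ) : Matrix (Fin n × Fin d) (Fin n × Fin d) ℂ :=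
  fun p q => Φ (Matrix.of fun a b => M (p.1, a) (q.1, b)) p.2 q.2

/-- Complete positivity. -/
def IsCompletelyPositive (Φ : Matrix (Fin d) (Fin d) ℂ →ₗ[ℂ] Matrix (Fin d) (Fin d) ℂ) : Prop :=
  ∀ n : ℕ, ∀ M : Matrix (Fin n × Fin d) (Fin n × Fin d) ℂ,
    M.PosSemidef → (ampliation Φ n M).PosSemidef

/-- The entropy functional `H(ρ) = tr(ρ log ρ)`. -/
def vnEnt (A : Matrix (Fin d) (Fin d) ℂ) : ℝ := ((A * mlog A).trace).re

open Finset Unitary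

namespace Matrix

variable {𝕜 n : Type*} [RCLike 𝕜] [Fintype n] [DecidableEq n]

open scoped MatrixOrder in
lemma PosSemidef.re_trace_mul_nonneg {X Y : Matrix n n 𝕜} (hX : X.PosSemidef)
    (hY : Y.PosSemidef) : 0 ≤ RCLike.re (X * Y).trace := by
  obtain ⟨B, rfl⟩ := CStarAlgebra.nonneg_iff_eq_star_mul_self.mp hY.nonneg
  have hBXB : (B * X * Bᴴ).PosSemidef := hX.mul_mul_conjTranspose_same B
  rw [← mul_assoc, trace_mul_comm, ← mul_assoc, star_eq_conjTranspose]
  exact (RCLike.nonneg_iff.mp hBXB.trace_nonneg).1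

lemma trace_conjStarAlgAut (u : unitary (Matrix n n 𝕜)) (X : Matrix n n 𝕜) :
    (conjStarAlgAut 𝕜 _ u X).trace = X.trace := by
  rw [conjStarAlgAut_apply, trace_mul_cycle, coe_star_mul_self, one_mul]

lemma posSemidef_single_one (i : n) : (single i i (1 : 𝕜)).PosSemidef := by
  simpa using posSemidef_conjTranspose_mul_self (single i i (1 : 𝕜))

namespace IsHermitian

variable {A : Matrix n n 𝕜} (hA : A.IsHermitian)

def eigenProj (i : n) : Matrix n n 𝕜 :=
  conjStarAlgAut 𝕜 _ hA.eigenvectorUnitary (single i i 1)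

lemma eigenProj_posSemidef (i : n) : (hA.eigenProj i).PosSemidef := by
  simpa [eigenProj, star_eq_conjTranspose] using
    (posSemidef_single_one i).mul_mul_conjTranspose_same (hA.eigenvectorUnitary : Matrix n n 𝕜)

lemma trace_eigenProj (i : n) : (hA.eigenProj i).trace = 1 := by
  rw [eigenProj, trace_conjStarAlgAut, trace_single_eq_same]

lemma sum_eigenProj : ∑ i, hA.eigenProj i = 1 := by
  simp only [eigenProj, ← map_sum, sum_single_one, map_one]

lemma cfc_eq_sum_smul_eigenProj (f : ℝ → ℝ) :
    hA.cfc f = ∑ i, (f (hA.eigenvalues i) : 𝕜) • hA.eigenProj i := by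
  simp only [IsHermitian.cfc, eigenProj, ← map_smul, ← map_sum, smul_single, smul_eq_mul,
    mul_one, sum_single_eq_diagonal, Function.comp_def]

lemma cfc_id_eq : hA.cfc id = A :=
  hA.spectral_theorem.symm

lemma trace_eigenProj_mul_cfc (f : ℝ → ℝ) (j : n) :
    (hA.eigenProj j * hA.cfc f).trace = f (hA.eigenvalues j) := by
  rw [eigenProj, IsHermitian.cfc, ← map_mul, trace_conjStarAlgAut, trace_single_mul]
  simp

lemma trace_eigenProj_mul_self (j : n) : (hA.eigenProj j * A).trace = hA.eigenvalues j := by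
  simpa [cfc_id_eq] using hA.trace_eigenProj_mul_cfc id j

lemma re_trace_mul_map_cfc {m : Type*} [Fintype m] (Φ : Matrix n n 𝕜 →ₗ[𝕜] Matrix m m 𝕜)
    (Y : Matrix m m 𝕜) (f : ℝ → ℝ) :
    RCLike.re (Y * Φ (hA.cfc f)).trace
      = ∑ i, f (hA.eigenvalues i) * RCLike.re (Y * Φ (hA.eigenProj i)).trace := by
  simp only [cfc_eq_sum_smul_eigenProj, map_sum, map_smul, mul_sum, mul_smul_comm, trace_sum,
    trace_smul, smul_eq_mul, RCLike.re_ofReal_mul]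

lemma re_trace_mul_eq_sum (X : Matrix n n 𝕜) :
    RCLike.re (A * X).trace
      = ∑ j, hA.eigenvalues j * RCLike.re (hA.eigenProj j * X).trace := by
  simpa [trace_mul_comm X, hA.cfc_id_eq] using hA.re_trace_mul_map_cfc LinearMap.id X id

end IsHermitian

end Matrix

lemma mlog_eq_cfc {A : Matrix (Fin d) (Fin d) ℂ} (hA : A.IsHermitian) :
    mlog A = hA.cfc Real.log := by
  rw [mlog, dif_pos hA]
  rfl

lemma vnEnt_eq_sum {B : Matrix (Fin d) (Fin d) ℂ} (hB : B.IsHermitian) :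
    vnEnt B = ∑ j, hB.eigenvalues j * Real.log (hB.eigenvalues j) := by
  rw [vnEnt, ← RCLike.re_to_complex, hB.re_trace_mul_eq_sum, mlog_eq_cfc hB]
  simp only [hB.trace_eigenProj_mul_cfc, RCLike.ofReal_re]

lemma IsCompletelyPositive.posSemidef_map
    {Φ : Matrix (Fin d) (Fin d) ℂ →ₗ[ℂ] Matrix (Fin d) (Fin d) ℂ}
    (hΦ : IsCompletelyPositive Φ) {A : Matrix (Fin d) (Fin d) ℂ} (hA : A.PosSemidef) :
    (Φ A).PosSemidef := by
  let e := Equiv.uniqueProd (Fin d) (Fin 1)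
  -- `ampliation Φ 1` is `Φ` reindexed along `e`
  exact (posSemidef_submatrix_equiv e).mp (hΦ 1 (A.submatrix e e) (hA.submatrix e))

lemma re_trace_eigenProj_mul_map_mlog_le {m : Type*} [Fintype m] [DecidableEq m]
    {Φ : Matrix (Fin d) (Fin d) ℂ →ₗ[ℂ] Matrix m m ℂ}
    (hΦ : ∀ A, A.PosSemidef → (Φ A).PosSemidef) (hunital : Φ 1 = 1)
    {ρ : Matrix (Fin d) (Fin d) ℂ} (hρ : ρ.PosDef) (hB : (Φ ρ).IsHermitian) (j : m) :
    RCLike.re (hB.eigenProj j * Φ (mlog ρ)).trace ≤ Real.log (hB.eigenvalues j) := by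
  set c : Fin d → ℝ := fun i ↦ RCLike.re (hB.eigenProj j * Φ (hρ.1.eigenProj i)).trace
  have hc_nonneg : ∀ i, 0 ≤ c i := fun i ↦
    (hB.eigenProj_posSemidef j).re_trace_mul_nonneg (hΦ _ (hρ.1.eigenProj_posSemidef i))
  have hc_sum : ∑ i, c i = 1 := by
    simp only [c, ← map_sum, ← trace_sum, ← mul_sum, hρ.1.sum_eigenProj,
      hunital, mul_one, hB.trace_eigenProj, RCLike.one_re]
  have hc_mean : ∑ i, c i * hρ.1.eigenvalues i = hB.eigenvalues j := by
    have := hρ.1.re_trace_mul_map_cfc Φ (hB.eigenProj j) id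
    rw [hρ.1.cfc_id_eq, hB.trace_eigenProj_mul_self, RCLike.ofReal_re] at this
    simpa only [id, mul_comm] using this.symm
  have hjensen := StrictConcaveOn.concaveOn strictConcaveOn_log_Ioi |>.le_map_sum
    (t := univ) (w := c) (p := hρ.1.eigenvalues) (fun i _ ↦ hc_nonneg i) hc_sum
    (fun i _ ↦ hρ.eigenvalues_pos i)
  simp only [smul_eq_mul, hc_mean] at hjensen
  rw [mlog_eq_cfc hρ.1, hρ.1.re_trace_mul_map_cfc]
  simpa only [mul_comm] using hjensen

lemma re_trace_map_mul_map_mlog_le_vnEnt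
    {Φ : Matrix (Fin d) (Fin d) ℂ →ₗ[ℂ] Matrix (Fin d) (Fin d) ℂ}
    (hΦ : ∀ A, A.PosSemidef → (Φ A).PosSemidef) (hunital : Φ 1 = 1)
    {ρ : Matrix (Fin d) (Fin d) ℂ} (hρ : ρ.PosDef) :
    ((Φ ρ * Φ (mlog ρ)).trace).re ≤ vnEnt (Φ ρ) := by
  have hB := hΦ ρ hρ.posSemidef
  rw [vnEnt_eq_sum hB.1, ← RCLike.re_to_complex, hB.1.re_trace_mul_eq_sum]
  exact sum_le_sum fun j _ ↦ mul_le_mul_of_nonneg_left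
    (re_trace_eigenProj_mul_map_mlog_le hΦ hunital hρ hB.1 j) (hB.eigenvalues_nonneg j)

theorem entropy_difference_upper_bound_general
    (Φ Φad : Matrix (Fin d) (Fin d) ℂ →ₗ[ℂ] Matrix (Fin d) (Fin d) ℂ)
    (hCP : IsCompletelyPositive Φ) (hunital : Φ 1 = 1)
    (hadj : ∀ a b : Matrix (Fin d) (Fin d) ℂ, (Φad a * b).trace = (a * Φ b).trace)
    (ρ : Matrix (Fin d) (Fin d) ℂ) (hρ : ρ.PosDef) :
    vnEnt ρ - vnEnt (Φ ρ) ≤ (((ρ - Φad (Φ ρ)) * mlog ρ).trace).re := by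
  have hadj_term : (((ρ - Φad (Φ ρ)) * mlog ρ).trace).re
      = vnEnt ρ - ((Φ ρ * Φ (mlog ρ)).trace).re := by
    rw [sub_mul, trace_sub, Complex.sub_re, hadj, vnEnt]
  have hmain := re_trace_map_mul_map_mlog_le_vnEnt (fun _ ↦ hCP.posSemidef_map) hunital hρ
  linarith

/-- `H(ρ) − H(Φ(ρ)) ≤ tr((ρ − Φ*Φ(ρ)) log ρ)` for a unital quantum channel `Φ`
with trace adjoint `Φ*`. -/
theorem entropy_difference_upper_bound
    (Φ Φad : Matrix (Fin d) (Fin d) ℂ →ₗ[ℂ] Matrix (Fin d) (Fin d) ℂ)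
    (hCP : IsCompletelyPositive Φ) (hunital : Φ 1 = 1)
    (htp : ∀ x, (Φ x).trace = x.trace)
    (hadj : ∀ a b : Matrix (Fin d) (Fin d) ℂ, (Φad a * b).trace = (a * Φ b).trace)
    (ρ : Matrix (Fin d) (Fin d) ℂ) (hρ : ρ.PosDef) (hρ1 : ρ.trace = 1) :
    vnEnt ρ - vnEnt (Φ ρ) ≤ (((ρ - Φad (Φ ρ)) * mlog ρ).trace).re :=
  entropy_difference_upper_bound_general Φ Φad hCP hunital hadj ρ hρ
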